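/- arXiv:1410.6194 — 4 statements merged into one kernel-verified Lean document; each statement's English description precedes it below -/
import Mathlib

section
/- For every k ≥ 0, the dispersion polynomial p(λ, μ) = det(λ A₀ + μ A₁ + B) equals λ(λ+1)^{k+1} − μ² ∑_{j=0}^{k} θ_{k+1-j} (λ+1)^j. -/
/-!
Expanding along the first column, whose only nonzero entries are `λ` and `μ`, leaves two minors:
the lower bidiagonal matrix with `λ + 1` on the diagonal and `-1` below it, of determinant
`(λ + 1) ^ (k + 1)`, and the same matrix with its first row replaced by `μ θ`. Expanding the latter
along its first column again gives a recursion whose solution is `∑ⱼ μ θⱼ (λ + 1) ^ (k - j)`.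
-/

open Matrix

namespace Matrix

variable {R : Type*} [CommRing R]

theorem det_succ_column_zero_of_eq_zero {n : ℕ} (A : Matrix (Fin (n + 2)) (Fin (n + 2)) R)
    (hA : ∀ i : Fin n, A i.succ.succ 0 = 0) :
    A.det = A 0 0 * (A.submatrix Fin.succ Fin.succ).det
      - A 1 0 * (A.submatrix (Fin.succAbove 1) Fin.succ).det := by
  rw [det_succ_column_zero, Fin.sum_univ_succ, Fin.sum_univ_succ]
  simp [hA, sub_eq_add_neg]

def lowerBidiagonal (n : ℕ) (a : R) : Matrix (Fin n) (Fin n) R :=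
  of fun i j => if i = j then a else if (j : ℕ) + 1 = i then -1 else 0

theorem det_lowerBidiagonal (n : ℕ) (a : R) : (lowerBidiagonal n a).det = a ^ n := by
  rw [det_of_isLowerTriangular _ fun i j (h : i < j) => ?_]
  · simp [lowerBidiagonal]
  · simp [lowerBidiagonal, h.ne]
    omega

theorem lowerBidiagonal_submatrix_succ (n : ℕ) (a : R) :
    (lowerBidiagonal (n + 1) a).submatrix Fin.succ Fin.succ = lowerBidiagonal n a := by
  ext i j
  simp [lowerBidiagonal]

theorem updateRow_zero_lowerBidiagonal_submatrix_succAbove_one {n : ℕ} (a : R)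
    (c : Fin (n + 2) → R) :
    ((lowerBidiagonal (n + 2) a).updateRow 0 c).submatrix (Fin.succAbove 1) Fin.succ
      = (lowerBidiagonal (n + 1) a).updateRow 0 (fun j => c j.succ) := by
  ext i j
  refine Fin.cases ?_ (fun i => ?_) i
  · simp
  · simp [lowerBidiagonal]

theorem det_updateRow_zero_lowerBidiagonal (a : R) :
    ∀ (n : ℕ) (c : Fin (n + 1) → R),
      ((lowerBidiagonal (n + 1) a).updateRow 0 c).det = ∑ j, c j * a ^ (n - j)
  | 0, c => by simp
  | n + 1, c => by
    rw [det_succ_column_zero_of_eq_zero _ fun i => by simp [lowerBidiagonal],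
      updateRow_zero_lowerBidiagonal_submatrix_succAbove_one,
      det_updateRow_zero_lowerBidiagonal a n, ← Fin.succAbove_zero, submatrix_updateRow_succAbove,
      Fin.succAbove_zero, lowerBidiagonal_submatrix_succ, det_lowerBidiagonal,
      Fin.sum_univ_succ (fun j => c j * _)]
    simp [lowerBidiagonal]

end Matrix

theorem Fin.sum_mul_pow_sub_eq_sum_range {R : Type*} [CommSemiring R] (n : ℕ)
    (c : Fin (n + 1) → R) (a : R) :
    ∑ j, c j * a ^ (n - j)
      = ∑ j ∈ Finset.range (n + 1), c ⟨n - j, Nat.sub_lt_succ n j⟩ * a ^ j := by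
  rw [Finset.sum_range, ← Equiv.sum_comp Fin.revPerm]
  refine Finset.sum_congr rfl fun j _ => ?_
  have hj : n - (n - j) = j := Nat.sub_sub_self (by omega)
  simp only [Fin.revPerm_apply, Fin.rev, Nat.add_sub_add_right, hj]

namespace Dispersion

variable {k : ℕ}

def A₁ (θ : Fin (k + 1) → ℝ) : Matrix (Fin (k + 2)) (Fin (k + 2)) ℂ :=
  of fun i j =>
    if (i : ℕ) = 0 then
      (if (j : ℕ) = 0 then 0
       else (θ ⟨(j : ℕ) - 1,
         Nat.lt_succ_of_le (Nat.sub_le_sub_right (Nat.le_of_lt_succ j.isLt) 1)⟩ : ℂ))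
    else if (i : ℕ) = 1 ∧ (j : ℕ) = 0 then 1 else 0

def B (k : ℕ) : Matrix (Fin (k + 2)) (Fin (k + 2)) ℂ :=
  of fun i j =>
    if (i : ℕ) = (j : ℕ) ∧ 1 ≤ (i : ℕ) then 1
    else if (i : ℕ) = (j : ℕ) + 1 ∧ 1 ≤ (j : ℕ) then -1 else 0

def pencil (θ : Fin (k + 1) → ℝ) (lam mu : ℂ) : Matrix (Fin (k + 2)) (Fin (k + 2)) ℂ :=
  lam • 1 + mu • A₁ θ + B k

variable (θ : Fin (k + 1) → ℝ) (lam mu : ℂ)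

theorem pencil_succ_succ_zero (i : Fin k) : pencil θ lam mu i.succ.succ 0 = 0 := by
  simp [pencil, A₁, B]

theorem pencil_zero_zero : pencil θ lam mu 0 0 = lam := by
  simp [pencil, A₁, B]

theorem pencil_one_zero : pencil θ lam mu 1 0 = mu := by
  simp [pencil, A₁, B]

theorem pencil_submatrix_succ :
    (pencil θ lam mu).submatrix Fin.succ Fin.succ = lowerBidiagonal (k + 1) (lam + 1) := by
  ext i j
  simp [pencil, A₁, B, lowerBidiagonal, one_apply]
  split_ifs <;> simp only [Fin.ext_iff] at * <;> first | omega | ring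

theorem pencil_submatrix_succAbove_one :
    (pencil θ lam mu).submatrix (Fin.succAbove 1) Fin.succ
      = (lowerBidiagonal (k + 1) (lam + 1)).updateRow 0 (fun j => mu * θ j) := by
  ext i j
  refine Fin.cases ?_ (fun i => ?_) i
  · simp [pencil, A₁, B, one_apply, (Fin.succ_ne_zero _).symm]
  · simp [pencil, A₁, B, lowerBidiagonal, one_apply]
    split_ifs <;> simp only [Fin.ext_iff, Fin.val_succ] at * <;> first | omega | ring

end Dispersion

/-- The dispersion polynomial `p(λ,μ) = det(λ A₀ + μ A₁ + B)` equals
`λ(λ+1)^(k+1) − μ² ∑_{j=0}^{k} θ_{k+1-j} (λ+1)^j`. -/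
theorem dispersion_polynomial (k : ℕ) (θ : Fin (k + 1) → ℝ) (lam mu : ℂ) :
    Matrix.det
      (lam • (1 : Matrix (Fin (k + 2)) (Fin (k + 2)) ℂ)
        + mu • (Matrix.of fun i j : Fin (k + 2) =>
            if (i : ℕ) = 0 then
              (if (j : ℕ) = 0 then 0
               else (θ ⟨(j : ℕ) - 1, by have := j.isLt; omega⟩ : ℂ))
            else if (i : ℕ) = 1 ∧ (j : ℕ) = 0 then 1 else 0)
        + (Matrix.of fun i j : Fin (k + 2) =>
            if (i : ℕ) = (j : ℕ) ∧ 1 ≤ (i : ℕ) then 1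
            else if (i : ℕ) = (j : ℕ) + 1 ∧ 1 ≤ (j : ℕ) then -1 else 0))
      = lam * (lam + 1) ^ (k + 1)
        - mu ^ 2 * ∑ j ∈ Finset.range (k + 1),
            (θ ⟨k - j, by omega⟩ : ℂ) * (lam + 1) ^ j := by
  change (Dispersion.pencil θ lam mu).det = _
  rw [det_succ_column_zero_of_eq_zero _ (Dispersion.pencil_succ_succ_zero θ lam mu),
    Dispersion.pencil_zero_zero, Dispersion.pencil_one_zero, Dispersion.pencil_submatrix_succ,
    Dispersion.pencil_submatrix_succAbove_one, det_lowerBidiagonal,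
    det_updateRow_zero_lowerBidiagonal]
  simp_rw [mul_assoc, ← Finset.mul_sum]
  rw [Fin.sum_mul_pow_sub_eq_sum_range]
  ring
end

section
/- Let g(t) = θ₁(1 + η₂ t + (η₃/2) t²)e^{-t} with θ₁ > 0, η₂, η₃ ≥ 0. Then g is non-increasing on [0, ∞) if and only if 0 ≤ η₂ ≤ 1 and (η₂ ≥ η₃ or η₂² + (η₃ − 1)² ≤ 1). -/
/-!
`g' = -(θ₁/2) e^{-t} p₁(t)` with `p₁(t) = 2(1 - η₂) + 2(η₂ - η₃)t + η₃t²`, so `g` is antitone on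
`[0, ∞)` iff `p₁ ≥ 0` there. At `t = 0` this is `η₂ ≤ 1`; if `η₃ ≤ η₂` every coefficient of `p₁`
is then nonnegative, and otherwise the vertex `(η₃ - η₂)/η₃` of the parabola is positive, where
`η₃ p₁ = 1 - η₂² - (η₃ - 1)²`.
-/

open Set Real

theorem antitoneOn_Ici_iff_of_hasDerivAt {f f' : ℝ → ℝ} (a : ℝ)
    (hf : ∀ x, HasDerivAt f (f' x) x) : AntitoneOn f (Ici a) ↔ ∀ x ∈ Ici a, f' x ≤ 0 := by
  refine ⟨fun hanti x hx => ?_, fun hf' => ?_⟩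
  · rw [← (hf x).hasDerivWithinAt.derivWithin (uniqueDiffOn_Ici a x hx)]
    exact hanti.derivWithin_nonpos
  · refine antitoneOn_of_hasDerivWithinAt_nonpos (convex_Ici a)
      (HasDerivAt.continuousOn fun x _ => hf x) (fun x _ => (hf x).hasDerivWithinAt) ?_
    rw [interior_Ici]
    exact fun x hx => hf' x (Ioi_subset_Ici_self hx)

theorem hasDerivAt_kernel (θ1 η2 η3 t : ℝ) :
    HasDerivAt (fun t => θ1 * (1 + η2 * t + η3 / 2 * t ^ 2) * exp (-t))
      (-(θ1 / 2 * exp (-t) * (2 * (1 - η2) + 2 * (η2 - η3) * t + η3 * t ^ 2))) t := by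
  have hexp : HasDerivAt (fun t => exp (-t)) (-exp (-t)) t := by
    simpa using (hasDerivAt_neg t).exp
  have hpoly : HasDerivAt (fun t => θ1 * (1 + η2 * t + η3 / 2 * t ^ 2)) (θ1 * (η2 + η3 * t)) t :=
    ((((hasDerivAt_id t).const_mul η2).const_add 1).add
      ((hasDerivAt_pow 2 t).const_mul (η3 / 2))).const_mul θ1 |>.congr_deriv (by push_cast; ring)
  exact (hpoly.mul hexp).congr_deriv (by ring)

theorem quadratic_nonneg_on_Ici_iff {η2 η3 : ℝ} (hη2 : 0 ≤ η2) (hη3 : 0 ≤ η3) :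
    (∀ t, 0 ≤ t → 0 ≤ 2 * (1 - η2) + 2 * (η2 - η3) * t + η3 * t ^ 2)
      ↔ η2 ≤ 1 ∧ (η3 ≤ η2 ∨ η2 ^ 2 + (η3 - 1) ^ 2 ≤ 1) := by
  constructor
  · intro hp
    refine ⟨by linarith [hp 0 le_rfl], ?_⟩
    rcases le_or_gt η3 η2 with hle | hlt
    · exact Or.inl hle
    · right
      have hpos : 0 < η3 := by linarith
      have hvertex := hp ((η3 - η2) / η3) (div_nonneg (by linarith) hpos.le)
      have hval : 2 * (1 - η2) + 2 * (η2 - η3) * ((η3 - η2) / η3) + η3 * ((η3 - η2) / η3) ^ 2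
          = (1 - η2 ^ 2 - (η3 - 1) ^ 2) / η3 := by
        field_simp; ring
      rw [hval] at hvertex
      linarith [(le_div_iff₀ hpos).mp hvertex]
  · rintro ⟨hη2le, hle | hcirc⟩ t ht
    · nlinarith [mul_nonneg hη3 (sq_nonneg t), mul_nonneg (sub_nonneg.mpr hle) ht]
    · rcases hη3.eq_or_lt with hzero | hpos
      · subst hzero
        nlinarith [mul_nonneg hη2 ht]
      · have hscaled : η3 * (2 * (1 - η2) + 2 * (η2 - η3) * t + η3 * t ^ 2)
            = (η3 * t + η2 - η3) ^ 2 + (1 - η2 ^ 2 - (η3 - 1) ^ 2) := by ring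
        refine (mul_nonneg_iff_of_pos_left hpos).mp ?_
        rw [hscaled]
        exact add_nonneg (sq_nonneg _) (by linarith)

/-- `g(t) = θ₁(1 + η₂t + (η₃/2)t²)e^(-t)` is non-increasing on `[0,∞)` iff
`0 ≤ η₂ ≤ 1` and (`η₂ ≥ η₃` or `η₂² + (η₃−1)² ≤ 1`). -/
theorem kernel_monotonicity_iff (θ1 η2 η3 : ℝ) (h1 : 0 < θ1) (h2 : 0 ≤ η2)
    (h3 : 0 ≤ η3) (g : ℝ → ℝ)
    (hg : ∀ t, g t = θ1 * (1 + η2 * t + η3 / 2 * t ^ 2) * Real.exp (-t)) :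
    AntitoneOn g (Set.Ici 0)
      ↔ (0 ≤ η2 ∧ η2 ≤ 1 ∧ (η3 ≤ η2 ∨ η2 ^ 2 + (η3 - 1) ^ 2 ≤ 1)) := by
  have hsign (t : ℝ) : -(θ1 / 2 * exp (-t) * (2 * (1 - η2) + 2 * (η2 - η3) * t + η3 * t ^ 2)) ≤ 0
      ↔ 0 ≤ 2 * (1 - η2) + 2 * (η2 - η3) * t + η3 * t ^ 2 := by
    rw [neg_nonpos, mul_nonneg_iff_of_pos_left (by positivity)]
  rw [funext hg, antitoneOn_Ici_iff_of_hasDerivAt 0 (hasDerivAt_kernel θ1 η2 η3)]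
  simp only [mem_Ici, hsign]
  rw [quadratic_nonneg_on_Ici_iff h2 h3, and_iff_right h2]
end

section
/- Let g(t) = θ₁(1 + η₂ t + (η₃/2) t²)e^{-t} with θ₁ > 0, η₂, η₃ ≥ 0. Then g is convex on [0, ∞) if and only if 2η₂ − η₃ ≤ 1 and (η₂ ≥ 2η₃ or 2η₂² + 4(η₃ − 1/2)² ≤ 1). -/
/-!
Differentiating twice, `g'' t = θ₁ e^{-t} p₂(t) / 2`, so `g` is convex on `[0, ∞)` exactly when the
upward parabola `p₂` is nonnegative there. That happens iff `p₂(0) ≥ 0` and either the vertex of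
`p₂` lies at `t ≤ 0` (the linear coefficient is nonnegative) or `p₂` has no two distinct real roots
(its discriminant is nonpositive).
-/

open Set Filter

theorem convexOn_Ici_iff_of_hasDerivAt2 {a : ℝ} {f f' f'' : ℝ → ℝ}
    (hf : ∀ x, HasDerivAt f (f' x) x) (hf' : ∀ x, HasDerivAt f' (f'' x) x) :
    ConvexOn ℝ (Ici a) f ↔ ∀ x ∈ Ici a, 0 ≤ f'' x := by
  constructor
  · intro hconv x hx
    have hmono : MonotoneOn f' (Ici a) := by
      simpa only [funext fun x => (hf x).deriv] using
        hconv.monotoneOn_deriv fun x _ => (hf x).differentiableAt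
    have hacc : AccPt x (𝓟 (Ici a)) := by
      rw [accPt_principal_iff_nhdsWithin]
      exact (nhdsGT_neBot x).mono <|
        nhdsWithin_mono x fun y hy => ⟨hx.out.trans (le_of_lt hy), ne_of_gt hy⟩
    exact (hf' x).hasDerivWithinAt.nonneg_of_monotoneOn hacc hmono
  · intro hnonneg
    refine convexOn_of_hasDerivWithinAt2_nonneg (convex_Ici a)
      (fun x _ => (hf x).continuousAt.continuousWithinAt)
      (fun x _ => (hf x).hasDerivWithinAt) (fun x _ => (hf' x).hasDerivWithinAt) ?_
    rw [interior_Ici]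
    exact fun x hx => hnonneg x (mem_Ici.mpr (le_of_lt hx))

theorem quadratic_nonneg_on_Ici_iff_s18 {A B C : ℝ} (hC : 0 ≤ C) :
    (∀ t ∈ Ici (0 : ℝ), 0 ≤ A + B * t + C * t ^ 2) ↔ 0 ≤ A ∧ (0 ≤ B ∨ B ^ 2 ≤ 4 * A * C) := by
  constructor
  · intro hq
    have hA : 0 ≤ A := by simpa using hq 0 (mem_Ici.mpr le_rfl)
    refine ⟨hA, or_iff_not_imp_left.mpr fun hB => ?_⟩
    rw [not_le] at hB
    rcases hC.eq_or_lt with rfl | hCpos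
    · -- `A + B t = -1` at `t = (A + 1) / -B`
      have hBt : B * ((A + 1) / -B) = -(A + 1) := by field_simp [hB.ne]
      have := hq ((A + 1) / -B) (mem_Ici.mpr (div_nonneg (by linarith) (by linarith)))
      linarith
    · -- evaluate at the vertex `-B / (2C)`
      have := hq (-B / (2 * C)) (mem_Ici.mpr (div_nonneg (by linarith) (by linarith)))
      field_simp at this
      nlinarith
  · rintro ⟨hA, hB | hdisc⟩ t (ht : 0 ≤ t)
    · positivity
    · -- completing the square: `4C (A + Bt + Ct²) = (2Ct + B)² + (4AC - B²)`
      rcases hC.eq_or_lt with rfl | hCpos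
      · have : B = 0 := by nlinarith
        simp [this, hA]
      · nlinarith [sq_nonneg (2 * C * t + B)]

noncomputable def quadraticMulExpNeg (a b c : ℝ) (t : ℝ) : ℝ :=
  (a + b * t + c * t ^ 2) * Real.exp (-t)

theorem hasDerivAt_quadraticMulExpNeg (a b c t : ℝ) :
    HasDerivAt (quadraticMulExpNeg a b c) (quadraticMulExpNeg (b - a) (2 * c - b) (-c) t) t := by
  have hpoly : HasDerivAt (fun t => a + b * t + c * t ^ 2) (b + c * (2 * t)) t := by
    simpa using (((hasDerivAt_id t).const_mul b).const_add a).fun_add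
      ((hasDerivAt_pow 2 t).const_mul c)
  have hprod : HasDerivAt (quadraticMulExpNeg a b c)
      ((b + c * (2 * t)) * Real.exp (-t) + (a + b * t + c * t ^ 2) * (Real.exp (-t) * -1)) t :=
    hpoly.fun_mul (hasDerivAt_neg t).exp
  convert hprod using 1
  rw [quadraticMulExpNeg]
  ring

theorem kernel_convexity_iff_general (θ1 η2 η3 : ℝ) (h1 : 0 < θ1)
    (h3 : 0 ≤ η3) (g : ℝ → ℝ)
    (hg : ∀ t, g t = θ1 * (1 + η2 * t + η3 / 2 * t ^ 2) * Real.exp (-t)) :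
    ConvexOn ℝ (Set.Ici (0 : ℝ)) g
      ↔ (2 * η2 - η3 ≤ 1 ∧ (2 * η3 ≤ η2 ∨ 2 * η2 ^ 2 + 4 * (η3 - 1 / 2) ^ 2 ≤ 1)) := by
  have hg_eq : g = fun t => θ1 * quadraticMulExpNeg 1 η2 (η3 / 2) t := by
    funext t
    rw [hg, quadraticMulExpNeg, mul_assoc]
  subst hg_eq
  rw [convexOn_Ici_iff_of_hasDerivAt2
    (fun t => (hasDerivAt_quadraticMulExpNeg _ _ _ t).const_mul θ1)
    (fun t => (hasDerivAt_quadraticMulExpNeg _ _ _ t).const_mul θ1)]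
  simp only [quadraticMulExpNeg, mul_nonneg_iff_of_pos_left h1,
    mul_nonneg_iff_of_pos_right (Real.exp_pos _)]
  rw [quadratic_nonneg_on_Ici_iff_s18 (by linarith)]
  refine and_congr ?_ (or_congr ?_ ?_) <;> constructor <;> intro <;> linarith

/-- `g(t) = θ₁(1 + η₂t + (η₃/2)t²)e^(-t)` is convex on `[0,∞)` iff
`2η₂ − η₃ ≤ 1` and (`η₂ ≥ 2η₃` or `2η₂² + 4(η₃−1/2)² ≤ 1`). -/
theorem kernel_convexity_iff (θ1 η2 η3 : ℝ) (h1 : 0 < θ1) (h2 : 0 ≤ η2)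
    (h3 : 0 ≤ η3) (g : ℝ → ℝ)
    (hg : ∀ t, g t = θ1 * (1 + η2 * t + η3 / 2 * t ^ 2) * Real.exp (-t)) :
    ConvexOn ℝ (Set.Ici (0 : ℝ)) g
      ↔ (2 * η2 - η3 ≤ 1 ∧ (2 * η3 ≤ η2 ∨ 2 * η2 ^ 2 + 4 * (η3 - 1 / 2) ^ 2 ≤ 1)) :=
  kernel_convexity_iff_general θ1 η2 η3 h1 h3 g hg
end

section
/- The convexity region is contained in the stability region, which is contained in the monotonicity region: with C = {(η₂,η₃) : η₂,η₃ ≥ 0, 2η₂−η₃ ≤ 1, (η₂ ≥ 2η₃ or 2η₂² + 4(η₃−1/2)² ≤ 1)}, S = {(η₂,η₃) : 0 ≤ η₂ ≤ 1, η₃ ≥ 0, (η₃ ≤ 2/3 or (2η₂+η₃)²/8 + (η₃−1)² ≤ 1)}, and M = {(η₂,η₃) : 0 ≤ η₂ ≤ 1, η₃ ≥ 0, (η₂ ≥ η₃ or η₂² + (η₃−1)² ≤ 1)}, one has C ⊆ S ⊆ M. -/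
/-- The convexity region `C` is contained in the stability region `S`, which is
contained in the monotonicity region `M`. -/
theorem convexity_stability_monotonicity_inclusions :
    ({p : ℝ × ℝ | 0 ≤ p.1 ∧ 0 ≤ p.2 ∧ 2 * p.1 - p.2 ≤ 1 ∧
        (2 * p.2 ≤ p.1 ∨ 2 * p.1 ^ 2 + 4 * (p.2 - 1 / 2) ^ 2 ≤ 1)}
      ⊆ {p : ℝ × ℝ | 0 ≤ p.1 ∧ p.1 ≤ 1 ∧ 0 ≤ p.2 ∧
          (p.2 ≤ 2 / 3 ∨ (2 * p.1 + p.2) ^ 2 / 8 + (p.2 - 1) ^ 2 ≤ 1)}) ∧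
    ({p : ℝ × ℝ | 0 ≤ p.1 ∧ p.1 ≤ 1 ∧ 0 ≤ p.2 ∧
        (p.2 ≤ 2 / 3 ∨ (2 * p.1 + p.2) ^ 2 / 8 + (p.2 - 1) ^ 2 ≤ 1)}
      ⊆ {p : ℝ × ℝ | 0 ≤ p.1 ∧ p.1 ≤ 1 ∧ 0 ≤ p.2 ∧
          (p.2 ≤ p.1 ∨ p.1 ^ 2 + (p.2 - 1) ^ 2 ≤ 1)}) := by
  constructor
  · rintro ⟨x, y⟩ ⟨hx, hy, hline, hc⟩
    simp only [Set.mem_setOf_eq] at *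
    refine ⟨hx, ?_, hy, ?_⟩
    · rcases hc with h | h
      · nlinarith
      · nlinarith [sq_nonneg (y - 1/2)]
    · rcases hc with h | h
      · left; nlinarith
      · right; nlinarith [sq_nonneg (2*x - y), sq_nonneg y]
  · rintro ⟨x, y⟩ ⟨hx, hx1, hy, hs⟩
    simp only [Set.mem_setOf_eq] at *
    refine ⟨hx, hx1, hy, ?_⟩
    rcases le_or_gt y x with h | h
    · exact Or.inl h
    · right
      rcases hs with h2 | h2
      · nlinarith
      · nlinarith [sq_nonneg (y - x)]
end
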